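/- arXiv:0904.4083 — 2 statements merged into one kernel-verified Lean document; each statement's English description precedes it below -/
import Mathlib

section
/- Let d_z, d_x ∈ [−1,1], let U, V ∈ SO(2), and let S = V·diag(d_z,d_x)·U. For a real 2×2 matrix M define K(M) := 1 − h₂((1+d_z)/2) − h₂((1+d_x)/2) + h₂((1+‖M e₁‖)/2) − h₂((1+M₁₁)/2). Then there exists Q_B ∈ SO(2) such that K(Q_B·S) = 1 − h₂((1+d_z)/2) − h₂((1+d_x)/2); consequently the supremum of K(Q_B·S) over Q_B ∈ SO(2) (one-side compensation) equals the supremum of K(Q_B·S·Q_A) over Q_A, Q_B ∈ SO(2) (two-side compensation). In particular any Q_B ∈ SO(2) whose first row is a scalar multiple of the first column of S achieves the equality. -/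
/-- Binary entropy function (base-2 logarithm), with the convention `0 * log 0 = 0`. -/
noncomputable def h2 (p : ℝ) : ℝ := -(p * Real.logb 2 p) - (1 - p) * Real.logb 2 (1 - p)

/-- `M` is a real 2×2 special orthogonal matrix. -/
def SO2 (M : Matrix (Fin 2) (Fin 2) ℝ) : Prop := M.transpose * M = 1 ∧ M.det = 1

/-- Euclidean norm of the first column of a 2×2 real matrix. -/
noncomputable def colNorm2 (M : Matrix (Fin 2) (Fin 2) ℝ) : ℝ :=
  Real.sqrt ((M 0 0) ^ 2 + (M 1 0) ^ 2)

/-! Multiplying by an orthogonal matrix on the left preserves the norm of the first column,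
and since `|d_z|, |d_x| ≤ 1` this norm is at most `1` for every `S * Q_A`. As `m ↦ h₂((1 + m)/2)`
is even and decreasing on `[0, 1]`, the correction `h₂((1 + ‖M e₁‖)/2) - h₂((1 + M₁₁)/2)` is then
nonpositive, and it vanishes when `|M₁₁| = ‖M e₁‖`. A rotation `Q_B` whose first row is
proportional to `S e₁` turns `S e₁` into a multiple of `e₁`, so it attains the common maximum of
both suprema. -/

open Matrix

lemma h2_eq_binEntropy_div_log_two (p : ℝ) : h2 p = Real.binEntropy p / Real.log 2 := by
  simp only [h2, Real.binEntropy, Real.logb, Real.log_inv]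
  ring

lemma h2_one_add_abs_div_two (m : ℝ) : h2 ((1 + |m|) / 2) = h2 ((1 + m) / 2) := by
  rcases abs_cases m with ⟨h, _⟩ | ⟨h, _⟩
  · rw [h]
  · rw [h, show (1 + -m) / 2 = 1 - (1 + m) / 2 by ring, h2_eq_binEntropy_div_log_two,
      h2_eq_binEntropy_div_log_two, Real.binEntropy_one_sub]

lemma h2_one_add_div_two_antitoneOn : AntitoneOn (fun m ↦ h2 ((1 + m) / 2)) (Set.Icc 0 1) := by
  intro a ha b hb hab
  simp only [h2_eq_binEntropy_div_log_two]
  gcongr ?_ / _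
  refine Real.binEntropy_strictAntiOn.antitoneOn ?_ ?_ (by linarith)
    <;> constructor <;> linarith [ha.1, ha.2, hb.1, hb.2]

section Orthogonal

variable {n R : Type*} [Fintype n] [DecidableEq n] [CommSemiring R]

lemma transpose_mul_self_mul {A B : Matrix n n R}
    (hA : Aᵀ * A = 1) (hB : Bᵀ * B = 1) : (A * B)ᵀ * (A * B) = 1 := by
  rw [transpose_mul, mul_assoc, ← mul_assoc Aᵀ, hA, one_mul, hB]

lemma dotProduct_mulVec_self_of_transpose_mul_self {Q : Matrix n n R} (hQ : Qᵀ * Q = 1)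
    (v : n → R) : Q *ᵥ v ⬝ᵥ Q *ᵥ v = v ⬝ᵥ v := by
  rw [dotProduct_mulVec, ← mulVec_transpose, mulVec_mulVec, hQ, one_mulVec]

end Orthogonal

lemma SO2_one : SO2 1 := ⟨by simp, by simp⟩

lemma colNorm2_eq_sqrt_dotProduct (M : Matrix (Fin 2) (Fin 2) ℝ) :
    colNorm2 M = √(Mᵀ 0 ⬝ᵥ Mᵀ 0) := by
  simp [colNorm2, dotProduct, Fin.sum_univ_two, sq]

lemma colNorm2_mul_of_transpose_mul_self {Q : Matrix (Fin 2) (Fin 2) ℝ} (hQ : Qᵀ * Q = 1)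
    (M : Matrix (Fin 2) (Fin 2) ℝ) : colNorm2 (Q * M) = colNorm2 M := by
  have : (Q * M)ᵀ 0 = Q *ᵥ Mᵀ 0 := rfl
  rw [colNorm2_eq_sqrt_dotProduct, colNorm2_eq_sqrt_dotProduct, this,
    dotProduct_mulVec_self_of_transpose_mul_self hQ]

lemma colNorm2_of_transpose_mul_self {W : Matrix (Fin 2) (Fin 2) ℝ} (hW : Wᵀ * W = 1) :
    colNorm2 W = 1 := by
  have h := congrFun (congrFun hW 0) 0
  simp only [mul_apply, Fin.sum_univ_two, transpose_apply, one_apply_eq] at h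
  rw [colNorm2, sq, sq, h, Real.sqrt_one]

lemma colNorm2_diagonal_mul_le {a b : ℝ} (ha : |a| ≤ 1) (hb : |b| ≤ 1)
    (W : Matrix (Fin 2) (Fin 2) ℝ) : colNorm2 (diagonal ![a, b] * W) ≤ colNorm2 W := by
  simp only [colNorm2, diagonal_mul, Matrix.cons_val_zero, Matrix.cons_val_one]
  have ha2 : a ^ 2 ≤ 1 := (sq_le_one_iff_abs_le_one a).2 ha
  have hb2 : b ^ 2 ≤ 1 := (sq_le_one_iff_abs_le_one b).2 hb
  apply Real.sqrt_le_sqrt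
  rw [mul_pow, mul_pow]
  nlinarith [mul_le_mul_of_nonneg_right ha2 (sq_nonneg (W 0 0)),
    mul_le_mul_of_nonneg_right hb2 (sq_nonneg (W 1 0))]

lemma abs_apply_zero_zero_le_colNorm2 (M : Matrix (Fin 2) (Fin 2) ℝ) : |M 0 0| ≤ colNorm2 M := by
  rw [colNorm2, ← Real.sqrt_sq_eq_abs]
  exact Real.sqrt_le_sqrt (le_add_of_nonneg_right (sq_nonneg _))

lemma h2_colNorm2_le {M : Matrix (Fin 2) (Fin 2) ℝ} (hM : colNorm2 M ≤ 1) :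
    h2 ((1 + colNorm2 M) / 2) ≤ h2 ((1 + M 0 0) / 2) := by
  have h := abs_apply_zero_zero_le_colNorm2 M
  rw [← h2_one_add_abs_div_two (M 0 0)]
  exact h2_one_add_div_two_antitoneOn ⟨abs_nonneg _, h.trans hM⟩ ⟨(abs_nonneg _).trans h, hM⟩ h

lemma colNorm2_mul_diagonal_mul_le_one {a b : ℝ} (ha : |a| ≤ 1) (hb : |b| ≤ 1)
    {V W : Matrix (Fin 2) (Fin 2) ℝ} (hV : Vᵀ * V = 1) (hW : Wᵀ * W = 1) :
    colNorm2 (V * diagonal ![a, b] * W) ≤ 1 := by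
  rw [mul_assoc, colNorm2_mul_of_transpose_mul_self hV, ← colNorm2_of_transpose_mul_self hW]
  exact colNorm2_diagonal_mul_le ha hb W

lemma abs_mul_apply_zero_zero_eq_colNorm2 {Q S : Matrix (Fin 2) (Fin 2) ℝ} (hQ : Qᵀ * Q = 1)
    {c : ℝ} (hc : ∀ j, Q 0 j = c * S j 0) : |(Q * S) 0 0| = colNorm2 S := by
  have hrow := congrFun (congrFun (mul_eq_one_comm.mp hQ : Q * Qᵀ = 1) 0) 0
  simp only [mul_apply, Fin.sum_univ_two, transpose_apply, one_apply_eq, hc] at hrow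
  have hQS : (Q * S) 0 0 = c * (S 0 0 ^ 2 + S 1 0 ^ 2) := by
    simp only [mul_apply, Fin.sum_univ_two, hc]
    ring
  rw [colNorm2, ← Real.sqrt_sq_eq_abs, hQS]
  congr 1
  linear_combination (S 0 0 ^ 2 + S 1 0 ^ 2) * hrow

lemma SO2_of_sq_add_sq {a b : ℝ} (h : a ^ 2 + b ^ 2 = 1) : SO2 !![a, b; -b, a] := by
  refine ⟨?_, ?_⟩
  · ext i j
    fin_cases i <;> fin_cases j <;> simp [mul_apply, Fin.sum_univ_two] <;>
      first | linear_combination h | ring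
  · rw [det_fin_two_of]
    linear_combination h

lemma exists_SO2_abs_mul_apply_zero_zero_eq_colNorm2 (S : Matrix (Fin 2) (Fin 2) ℝ) :
    ∃ Q, SO2 Q ∧ |(Q * S) 0 0| = colNorm2 S := by
  rcases eq_or_ne (colNorm2 S) 0 with hS | hS
  · refine ⟨1, SO2_one, ?_⟩
    rw [one_mul, hS]
    exact le_antisymm (hS ▸ abs_apply_zero_zero_le_colNorm2 S) (abs_nonneg _)
  · have hsq : colNorm2 S ^ 2 = S 0 0 ^ 2 + S 1 0 ^ 2 := Real.sq_sqrt (by positivity)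
    set n := colNorm2 S
    have hQ : SO2 !![S 0 0 / n, S 1 0 / n; -(S 1 0 / n), S 0 0 / n] :=
      SO2_of_sq_add_sq (by field_simp; linear_combination -hsq)
    refine ⟨_, hQ, abs_mul_apply_zero_zero_eq_colNorm2 hQ.1 (c := n⁻¹) ?_⟩
    intro j
    fin_cases j <;> simp [div_eq_inv_mul]

theorem stmt7 (dz dx : ℝ) (hdz : dz ∈ Set.Icc (-1 : ℝ) 1) (hdx : dx ∈ Set.Icc (-1 : ℝ) 1)
    (U V : Matrix (Fin 2) (Fin 2) ℝ) (hU : SO2 U) (hV : SO2 V)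
    (S : Matrix (Fin 2) (Fin 2) ℝ)
    (hS : S = V * Matrix.diagonal ![dz, dx] * U)
    (K : Matrix (Fin 2) (Fin 2) ℝ → ℝ)
    (hK : ∀ M, K M = 1 - h2 ((1 + dz) / 2) - h2 ((1 + dx) / 2)
      + h2 ((1 + colNorm2 M) / 2) - h2 ((1 + M 0 0) / 2)) :
    (∃ QB, SO2 QB ∧ K (QB * S) = 1 - h2 ((1 + dz) / 2) - h2 ((1 + dx) / 2)) ∧
    sSup {r : ℝ | ∃ QB, SO2 QB ∧ r = K (QB * S)} =
      sSup {r : ℝ | ∃ QA QB, SO2 QA ∧ SO2 QB ∧ r = K (QB * S * QA)} ∧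
    (∀ QB, SO2 QB → (∃ c : ℝ, ∀ j, QB 0 j = c * S j 0) →
      K (QB * S) = 1 - h2 ((1 + dz) / 2) - h2 ((1 + dx) / 2)) := by
  obtain ⟨hdz₁, hdz₂⟩ := hdz
  obtain ⟨hdx₁, hdx₂⟩ := hdx
  set base := 1 - h2 ((1 + dz) / 2) - h2 ((1 + dx) / 2)
  have hK_le : ∀ M, colNorm2 M ≤ 1 → K M ≤ base := fun M hM ↦ by
    linarith [hK M, h2_colNorm2_le hM]
  have hK_eq : ∀ M, |M 0 0| = colNorm2 M → K M = base := fun M hM ↦ by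
    rw [hK, ← hM, h2_one_add_abs_div_two]
    ring
  have hcol : ∀ QA, QAᵀ * QA = 1 → colNorm2 (S * QA) ≤ 1 := fun QA hQA ↦ by
    rw [hS, mul_assoc _ U]
    exact colNorm2_mul_diagonal_mul_le_one (abs_le.2 ⟨hdz₁, hdz₂⟩) (abs_le.2 ⟨hdx₁, hdx₂⟩) hV.1
      (transpose_mul_self_mul hU.1 hQA)
  have hcolS : colNorm2 S ≤ 1 := by simpa using hcol 1 (by simp)
  have hK_aligned : ∀ QB, SO2 QB → |(QB * S) 0 0| = colNorm2 S → K (QB * S) = base :=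
    fun QB hQB h ↦ hK_eq _ (h.trans (colNorm2_mul_of_transpose_mul_self hQB.1 S).symm)
  obtain ⟨Q₀, hQ₀, hQ₀S⟩ := exists_SO2_abs_mul_apply_zero_zero_eq_colNorm2 S
  have hKQ₀ := hK_aligned Q₀ hQ₀ hQ₀S
  refine ⟨⟨Q₀, hQ₀, hKQ₀⟩, ?_, fun QB hQB ⟨c, hc⟩ ↦
    hK_aligned QB hQB (abs_mul_apply_zero_zero_eq_colNorm2 hQB.1 hc)⟩
  have hone : IsGreatest {r : ℝ | ∃ QB, SO2 QB ∧ r = K (QB * S)} base := by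
    refine ⟨⟨Q₀, hQ₀, hKQ₀.symm⟩, ?_⟩
    rintro r ⟨QB, hQB, rfl⟩
    exact hK_le _ ((colNorm2_mul_of_transpose_mul_self hQB.1 S).trans_le hcolS)
  have htwo : IsGreatest {r : ℝ | ∃ QA QB, SO2 QA ∧ SO2 QB ∧ r = K (QB * S * QA)} base := by
    refine ⟨⟨1, Q₀, SO2_one, hQ₀, by rw [mul_one, hKQ₀]⟩, ?_⟩
    rintro r ⟨QA, QB, hQA, hQB, rfl⟩
    rw [mul_assoc]
    exact hK_le _ ((colNorm2_mul_of_transpose_mul_self hQB.1 _).trans_le (hcol QA hQA.1))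
  rw [hone.csSup_eq, htwo.csSup_eq]
end

section
/- Let e₁*, e₂*, e₃* be real numbers with |e₁*|, |e₂*|, |e₃*| ≤ 1, let A, B ∈ SO(3), and let R = B·diag(e₁*,e₂*,e₃*)·A. Assume the first two columns of R are not orthogonal, i.e., ⟨R e₁, R e₂⟩ ≠ 0. Let T be the real 3×2 matrix whose columns are the first two columns of R, and let t₁ ≥ t₂ ≥ 0 be such that t₁² and t₂² are the eigenvalues (with multiplicity) of Tᵀ·T. Then for every O ∈ SO(3), h₂((1+(O·R)₁₁)/2) + h₂((1+(O·R)₂₂)/2) > h₂((1+t₁)/2) + h₂((1+t₂)/2). -/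
/-- `M` is a real 3×3 special orthogonal matrix. -/
def SO3 (M : Matrix (Fin 3) (Fin 3) ℝ) : Prop := M.transpose * M = 1 ∧ M.det = 1

/-!
Put `S = O * T`, the first two columns of `O * R`. Orthogonality of `O` gives `Sᵀ S = Tᵀ T`, so
`S` has singular values `t₁ ≥ t₂`. Hence `S₀₀² ≤ (TᵀT)₀₀` and `S₁₁² ≤ (TᵀT)₁₁`, and both diagonal
entries of `TᵀT` lie strictly below its top eigenvalue `t₁²` because `TᵀT` is not diagonal; and
`|S₀₀| + |S₁₁| ≤ t₁ + t₂`, from the trace of `SᵀS` and the Lagrange identity for its determinant.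
Moreover `t₁ ≤ 1`, since `1 - RᵀR = Aᵀ (1 - D²) A` is positive semidefinite.
The function `x ↦ h₂((1 + x) / 2)` is even, strictly decreasing on `[0, 1]` and strictly concave,
and `(t₁, t₂)` weakly majorizes `(|S₀₀|, |S₁₁|)` with `|S₀₀|, |S₁₁| < t₁`: this forces the
strict inequality.
-/

open Real Set Matrix

lemma h2_eq_binEntropy_div (p : ℝ) : h2 p = binEntropy p / log 2 := by
  simp only [h2, binEntropy, logb, log_inv]
  ring

noncomputable def h2OfBias (x : ℝ) : ℝ := h2 ((1 + x) / 2)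

lemma h2OfBias_abs (x : ℝ) : h2OfBias |x| = h2OfBias x := by
  rcases abs_choice x with hx | hx
  · rw [hx]
  · rw [hx, h2OfBias, h2OfBias, h2_eq_binEntropy_div, h2_eq_binEntropy_div,
      ← binEntropy_one_sub ((1 + x) / 2)]
    ring_nf

lemma strictAntiOn_h2OfBias : StrictAntiOn h2OfBias (Icc 0 1) := by
  intro x ⟨hx0, hx1⟩ y ⟨hy0, hy1⟩ hxy
  simp only [h2OfBias, h2_eq_binEntropy_div]
  have hmem : ∀ z : ℝ, 0 ≤ z → z ≤ 1 → (1 + z) / 2 ∈ Icc 2⁻¹ 1 := fun z h0 h1 =>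
    ⟨by linarith, by linarith⟩
  exact div_lt_div_of_pos_right
    (binEntropy_strictAntiOn (hmem x hx0 hx1) (hmem y hy0 hy1) (by linarith)) (log_pos one_lt_two)

lemma strictConcaveOn_h2OfBias : StrictConcaveOn ℝ (Icc (-1) 1) h2OfBias := by
  refine ⟨convex_Icc _ _, fun x ⟨hx0, hx1⟩ y ⟨hy0, hy1⟩ hxy a b ha hb hab => ?_⟩
  have key := strictConcave_binEntropy.2 (x := (1 + x) / 2) (y := (1 + y) / 2)
    ⟨by linarith, by linarith⟩ ⟨by linarith, by linarith⟩ (by contrapose! hxy; linarith) ha hb hab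
  have harg : a • ((1 + x) / 2) + b • ((1 + y) / 2) = (1 + (a • x + b • y)) / 2 := by
    simp only [smul_eq_mul]; linear_combination hab / 2
  rw [harg] at key
  simp only [h2OfBias, h2_eq_binEntropy_div, smul_eq_mul] at key ⊢
  have hlog : 0 < log 2 := log_pos one_lt_two
  rw [mul_div_assoc', mul_div_assoc', ← add_div]
  gcongr

theorem StrictConcaveOn.add_lt_add_of_mem_Ioo {s : Set ℝ} {f : ℝ → ℝ}
    (hf : StrictConcaveOn ℝ s f) {x y a b : ℝ} (hx : x ∈ s) (hy : y ∈ s) (ha : a ∈ Ioo x y)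
    (hab : a + b = x + y) : f x + f y < f a + f b := by
  obtain ⟨hxa, hay⟩ := ha
  have hxy : 0 < y - x := by linarith
  set μ := (y - a) / (y - x)
  have hμ : μ * (y - x) = y - a := div_mul_cancel₀ _ hxy.ne'
  have hμ0 : 0 < μ := div_pos (by linarith) hxy
  have hμ1 : 0 < 1 - μ := by rw [sub_pos, div_lt_one hxy]; linarith
  have hμa : μ * x + (1 - μ) * y = a := by linear_combination -hμ
  have hμb : (1 - μ) * x + μ * y = b := by linear_combination -hab - hμa
  have hne : x ≠ y := (sub_pos.1 hxy).ne
  have hfa := hf.2 hx hy hne hμ0 hμ1 (by ring)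
  have hfb := hf.2 hx hy hne hμ1 hμ0 (by ring)
  simp only [smul_eq_mul, hμa, hμb] at hfa hfb
  linarith

lemma h2OfBias_add_lt {t₁ t₂ a b : ℝ} (ht₂ : 0 ≤ t₂) (ht₂₁ : t₂ ≤ t₁) (ht₁ : t₁ ≤ 1)
    (ha : |a| < t₁) (hb : |b| < t₁) (hab : |a| + |b| ≤ t₁ + t₂) :
    h2OfBias t₁ + h2OfBias t₂ < h2OfBias a + h2OfBias b := by
  rw [← h2OfBias_abs a, ← h2OfBias_abs b]
  have hmem : ∀ {z}, 0 ≤ z → z ≤ t₁ → z ∈ Icc (0 : ℝ) 1 := fun h0 h1 => ⟨h0, h1.trans ht₁⟩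
  have ht₁mem := hmem (ht₂.trans ht₂₁) le_rfl
  have hamem := hmem (abs_nonneg a) ha.le
  have hbmem := hmem (abs_nonneg b) hb.le
  have ht₂mem := hmem ht₂ ht₂₁
  rcases le_or_gt |a| t₂ with hat | hat
  · have := strictAntiOn_h2OfBias hbmem ht₁mem hb
    have := strictAntiOn_h2OfBias.antitoneOn hamem ht₂mem hat
    linarith
  rcases le_or_gt |b| t₂ with hbt | hbt
  · have := strictAntiOn_h2OfBias hamem ht₁mem ha
    have := strictAntiOn_h2OfBias.antitoneOn hbmem ht₂mem hbt
    linarith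
  -- `(t₂, γ)` majorizes `(|a|, |b|)` and has the same sum
  set γ := |a| + |b| - t₂
  have hγmem := hmem (by linarith) (by linarith : γ ≤ t₁)
  have hγ := strictAntiOn_h2OfBias.antitoneOn hγmem ht₁mem (by linarith : γ ≤ t₁)
  have hmaj := strictConcaveOn_h2OfBias.add_lt_add_of_mem_Ioo
    (Icc_subset_Icc_left (by norm_num) ht₂mem) (Icc_subset_Icc_left (by norm_num) hγmem)
    (a := |a|) (b := |b|) ⟨hat, by linarith⟩ (by ring)
  linarith

lemma sq_le_transpose_mul_self_apply {m n : Type*} [Fintype m] (M : Matrix m n ℝ) (i : m) (j : n) :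
    M i j ^ 2 ≤ (Mᵀ * M) j j := by
  rw [mul_apply]
  simp_rw [transpose_apply, ← sq]
  exact Finset.single_le_sum (fun k _ => sq_nonneg (M k j)) (Finset.mem_univ i)

lemma trace_transpose_mul_self_fin_three_two (T : Matrix (Fin 3) (Fin 2) ℝ) :
    (Tᵀ * T).trace = T 0 0 ^ 2 + T 0 1 ^ 2 + T 1 0 ^ 2 + T 1 1 ^ 2 + T 2 0 ^ 2 + T 2 1 ^ 2 := by
  simp only [trace_fin_two, mul_apply, Fin.sum_univ_three, transpose_apply]
  ring

lemma det_transpose_mul_self_fin_three_two (T : Matrix (Fin 3) (Fin 2) ℝ) :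
    (Tᵀ * T).det = (T 0 0 * T 1 1 - T 0 1 * T 1 0) ^ 2 + (T 0 0 * T 2 1 - T 0 1 * T 2 0) ^ 2
      + (T 1 0 * T 2 1 - T 1 1 * T 2 0) ^ 2 := by
  simp only [det_fin_two, mul_apply, Fin.sum_univ_three, transpose_apply]
  ring

lemma abs_add_abs_le_add_of_sq_le {x y z w s t : ℝ} (hs : 0 ≤ s) (ht : 0 ≤ t)
    (hnorm : x ^ 2 + y ^ 2 + z ^ 2 + w ^ 2 ≤ s ^ 2 + t ^ 2) (hdet : (x * y - z * w) ^ 2 ≤ (s * t) ^ 2) :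
    |x| + |y| ≤ s + t := by
  have hdet' : |x * y - z * w| ≤ s * t := abs_le_of_sq_le_sq hdet (mul_nonneg hs ht)
  have hxy : |x| * |y| ≤ s * t + (z ^ 2 + w ^ 2) / 2 := by
    rw [← abs_mul]
    calc |x * y| ≤ |x * y - z * w| + |z * w| := by simpa using abs_add_le (x * y - z * w) (z * w)
      _ ≤ s * t + (z ^ 2 + w ^ 2) / 2 := by
        rw [abs_mul]
        nlinarith [sq_nonneg (|z| - |w|), sq_abs z, sq_abs w]
  refine abs_le_of_sq_le_sq' ?_ (add_nonneg hs ht) |>.2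
  nlinarith [sq_abs x, sq_abs y]

lemma abs_add_abs_le_of_trace_of_det (T : Matrix (Fin 3) (Fin 2) ℝ) {t₁ t₂ : ℝ} (ht₁ : 0 ≤ t₁)
    (ht₂ : 0 ≤ t₂) (htr : t₁ ^ 2 + t₂ ^ 2 = (Tᵀ * T).trace) (hdet : t₁ ^ 2 * t₂ ^ 2 = (Tᵀ * T).det) :
    |T 0 0| + |T 1 1| ≤ t₁ + t₂ := by
  rw [trace_transpose_mul_self_fin_three_two] at htr
  rw [det_transpose_mul_self_fin_three_two] at hdet
  refine abs_add_abs_le_add_of_sq_le (z := T 0 1) (w := T 1 0) ht₁ ht₂ ?_ ?_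
  · nlinarith [sq_nonneg (T 2 0), sq_nonneg (T 2 1)]
  · nlinarith [sq_nonneg (T 0 0 * T 2 1 - T 0 1 * T 2 0), sq_nonneg (T 1 0 * T 2 1 - T 1 1 * T 2 0)]

lemma diag_lt_of_trace_of_det {G : Matrix (Fin 2) (Fin 2) ℝ} (hG : G 1 0 = G 0 1) (hc : G 0 1 ≠ 0)
    {l₁ l₂ : ℝ} (hl : l₂ ≤ l₁) (htr : l₁ + l₂ = G.trace) (hdet : l₁ * l₂ = G.det) :
    G 0 0 < l₁ ∧ G 1 1 < l₁ := by
  rw [trace_fin_two] at htr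
  rw [det_fin_two, hG] at hdet
  have hprod : (l₁ - G 0 0) * (l₁ - G 1 1) = G 0 1 ^ 2 := by
    linear_combination l₁ * htr - hdet
  have hpos : 0 < G 0 1 ^ 2 := by positivity
  constructor <;> nlinarith

lemma le_one_of_posSemidef_one_sub {G : Matrix (Fin 2) (Fin 2) ℝ} (hG : (1 - G).PosSemidef)
    {l₁ l₂ : ℝ} (hl : l₂ ≤ l₁) (htr : l₁ + l₂ = G.trace) (hdet : l₁ * l₂ = G.det) : l₁ ≤ 1 := by
  have htr' := hG.trace_nonneg
  have hdet' := hG.det_nonneg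
  rw [trace_fin_two] at htr htr'
  rw [det_fin_two] at hdet hdet'
  simp only [Matrix.sub_apply, one_apply_eq, one_apply_ne (show (0 : Fin 2) ≠ 1 by decide),
    one_apply_ne (show (1 : Fin 2) ≠ 0 by decide)] at htr' hdet'
  nlinarith

lemma posSemidef_one_sub_transpose_mul_self {n : Type*} [Fintype n] [DecidableEq n]
    {A B : Matrix n n ℝ} (hA : Aᵀ * A = 1) (hB : Bᵀ * B = 1) {d : n → ℝ} (hd : ∀ i, |d i| ≤ 1) :
    (1 - (B * diagonal d * A)ᵀ * (B * diagonal d * A)).PosSemidef := by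
  have hfactor : 1 - (B * diagonal d * A)ᵀ * (B * diagonal d * A) =
      Aᴴ * diagonal (fun i => 1 - d i ^ 2) * A := by
    have hD : diagonal (fun i => 1 - d i ^ 2) = 1 - diagonal d * diagonal d := by
      simp [diagonal_mul_diagonal, sq, ← diagonal_one, diagonal_sub]
    calc 1 - (B * diagonal d * A)ᵀ * (B * diagonal d * A)
        = Aᵀ * A - Aᵀ * diagonal d * (Bᵀ * B) * diagonal d * A := by
          simp only [hA, transpose_mul, diagonal_transpose, Matrix.mul_assoc]
      _ = Aᴴ * diagonal (fun i => 1 - d i ^ 2) * A := by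
          rw [hB, hD, conjTranspose_eq_transpose_of_trivial]
          simp only [Matrix.mul_sub, Matrix.sub_mul, Matrix.mul_one, Matrix.mul_assoc]
  rw [hfactor]
  refine (PosSemidef.diagonal fun i => ?_).conjTranspose_mul_mul_same A
  simpa [sub_nonneg, sq_le_one_iff_abs_le_one] using hd i

theorem stmt15 (e1 e2 e3 : ℝ) (h1 : |e1| ≤ 1) (h2e : |e2| ≤ 1) (h3 : |e3| ≤ 1)
    (A B : Matrix (Fin 3) (Fin 3) ℝ) (hA : SO3 A) (hB : SO3 B)
    (R : Matrix (Fin 3) (Fin 3) ℝ)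
    (hR : R = B * Matrix.diagonal ![e1, e2, e3] * A)
    (hne : R 0 0 * R 0 1 + R 1 0 * R 1 1 + R 2 0 * R 2 1 ≠ 0)
    (T : Matrix (Fin 3) (Fin 2) ℝ)
    (hT : ∀ (i : Fin 3) (j : Fin 2), T i j = R i j.castSucc)
    (t1 t2 : ℝ) (ht21 : t2 ≤ t1) (ht2 : 0 ≤ t2)
    (htr : t1 ^ 2 + t2 ^ 2 = (T.transpose * T).trace)
    (hdet : t1 ^ 2 * t2 ^ 2 = (T.transpose * T).det) :
    ∀ O, SO3 O →
      h2 ((1 + t1) / 2) + h2 ((1 + t2) / 2) <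
        h2 ((1 + (O * R) 0 0) / 2) + h2 ((1 + (O * R) 1 1) / 2) := by
  intro O hO
  have hTR : T = R.submatrix id Fin.castSucc := Matrix.ext hT
  have ht1 : 0 ≤ t1 := ht2.trans ht21
  have hsq : t2 ^ 2 ≤ t1 ^ 2 := pow_le_pow_left₀ ht2 ht21 2
  have hG : (Tᵀ * T) 1 0 = (Tᵀ * T) 0 1 := by simp only [mul_apply, transpose_apply, mul_comm]
  have hc : (Tᵀ * T) 0 1 ≠ 0 := by simpa [mul_apply, Fin.sum_univ_three, hT] using hne
  obtain ⟨hp, hq⟩ := diag_lt_of_trace_of_det hG hc hsq htr hdet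
  have hcontr : (1 - Tᵀ * T).PosSemidef := by
    have hsub : 1 - Tᵀ * T = (1 - Rᵀ * R).submatrix Fin.castSucc Fin.castSucc := by
      ext i j
      simp [hTR, mul_apply, one_apply]
    rw [hsub, hR]
    exact (posSemidef_one_sub_transpose_mul_self hA.1 hB.1
      (by simp [Fin.forall_fin_succ, h1, h2e, h3])).submatrix Fin.castSucc
  have ht1le : t1 ≤ 1 := le_of_pow_le_pow_left₀ two_ne_zero zero_le_one
    (by simpa using le_one_of_posSemidef_one_sub hcontr hsq htr hdet)
  have hS : (O * T)ᵀ * (O * T) = Tᵀ * T := by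
    rw [transpose_mul, Matrix.mul_assoc, ← Matrix.mul_assoc Oᵀ, hO.1, Matrix.one_mul]
  have ha : |(O * T) 0 0| < t1 :=
    abs_lt_of_sq_lt_sq ((hS ▸ sq_le_transpose_mul_self_apply (O * T) 0 0).trans_lt hp) ht1
  have hb : |(O * T) 1 1| < t1 :=
    abs_lt_of_sq_lt_sq ((hS ▸ sq_le_transpose_mul_self_apply (O * T) 1 1).trans_lt hq) ht1
  have hsum := abs_add_abs_le_of_trace_of_det (O * T) ht1 ht2 (hS ▸ htr) (hS ▸ hdet)
  have hOR : ∀ i j, (O * R) i (Fin.castSucc j) = (O * T) i j := fun i j => by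
    simp [hTR, mul_apply]
  have key := h2OfBias_add_lt ht2 ht21 ht1le ha hb hsum
  rwa [← hOR 0 0, ← hOR 1 1] at key
end
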